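/- arXiv:1307.5896 — 3 statements merged into one kernel-verified Lean document; each statement's English description precedes it below -/
import Mathlib

section
/- If Assumptions (A), (B), and (C) hold, then for every λ ∈ ℝ \ (closure(Δ([0,∞))) ∪ {d_∞}) the following limits exist, are finite and satisfy: lim_{t→∞} (∂π/∂t)(t,λ)/π(t,λ) = 0, lim_{t→∞} ρ(t,λ)/π(t,λ) ∈ ℝ, and lim_{t→∞} κ(t,λ)/π(t,λ) ∈ ℝ. -/
/-! For real `λ` the coefficient `π` is real, so `Im (ρ/π) = π'/π = (log |π|)'`, and with
`G := Im (b̄ c/(d − λ))` one has `Re (ρ/π) = 2 G/π` and `Im (κ/π) = G'/π`. By (B2) and (B3) `π` is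
bounded and bounded away from `0` near `∞`, so `log |π|` is bounded; by the mean value theorem a
bounded function whose derivative has a limit at `∞` has limit derivative `0`, hence `π'/π → 0`.
Then `(G/π)' = G'/π − (G/π)(π'/π)` has the same limit as `G'/π`, and `G/π` converges, so that
limit is `0` as well. -/

noncomputable section
open MeasureTheory Set Filter Topology

namespace PaperEss

/-- The leading Schur-complement coefficient `π(t, λ) = p(t) − |b(t)|²/(d(t) − λ)`. -/
def pir (p : ℝ → ℝ) (b : ℝ → ℂ) (d : ℝ → ℝ) (l : ℂ) (t : ℝ) : ℂ :=
  (p t : ℂ) - (‖b t‖ : ℂ) ^ 2 / ((d t : ℂ) - l)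

/-- `ρ(t, λ) = −2 Im (b c̄)/(d − λ) + i ∂π/∂t`. -/
def rho (p : ℝ → ℝ) (b c : ℝ → ℂ) (d : ℝ → ℝ) (l : ℂ) (t : ℝ) : ℂ :=
  -(2 * ((b t * (starRingEnd ℂ) (c t)).im : ℂ)) / ((d t : ℂ) - l)
    + Complex.I * deriv (pir p b d l) t

/-- `κ(t, λ) = q − λ − |c|²/(d − λ) + (d/dt)(b̄ c/(d − λ))`. -/
def kap (p q : ℝ → ℝ) (b c : ℝ → ℂ) (d : ℝ → ℝ) (l : ℂ) (t : ℝ) : ℂ :=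
  (q t : ℂ) - l - (‖c t‖ : ℂ) ^ 2 / ((d t : ℂ) - l)
    + deriv (fun s => (starRingEnd ℂ) (b s) * c s / ((d s : ℂ) - l)) t

/-- `Δ(t) = d(t) − |b(t)|²/p(t)`. -/
def Del (p : ℝ → ℝ) (b : ℝ → ℂ) (d : ℝ → ℝ) (t : ℝ) : ℝ := d t - ‖b t‖ ^ 2 / p t

/-- **Assumption (A)**: smoothness and positivity of the coefficients on `[0, ∞)`. -/
structure AssA (p q d : ℝ → ℝ) (b c : ℝ → ℂ) : Prop where
  hp : ContDiffOn ℝ 2 p (Ici 0)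
  hd : ContDiffOn ℝ 2 d (Ici 0)
  hb : ContDiffOn ℝ 2 b (Ici 0)
  hc : ContDiffOn ℝ 1 c (Ici 0)
  hq : ContinuousOn q (Ici 0)
  hppos : ∀ t ∈ Ici (0 : ℝ), 0 < p t

/-- **Assumption (B)**: `L` is the (possibly improper) limit of `d` at `∞` (B1);
growth bounds on `b`, `c` (B2); boundedness conditions (B3a), (B3b). -/
structure AssB (p q d : ℝ → ℝ) (b c : ℝ → ℂ) (L : EReal) : Prop where
  hB1 : Tendsto (fun t => (d t : EReal)) atTop (nhds L)
  hB2 : ∃ β > (0 : ℝ), ∃ γ > (0 : ℝ), ∀ t ≥ (0 : ℝ),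
    ‖b t‖ ≤ β * (|d t| + 1) ∧ ‖c t‖ ≤ γ * (|d t| + 1)
  hB3a : ∃ l : ℝ, (l : EReal) ≠ L ∧ ∃ tl ≥ (0 : ℝ), (∀ t ≥ tl, d t ≠ l) ∧
    ∃ M : ℝ, ∀ t ≥ tl, ‖pir p b d (l : ℂ) t‖ ≤ M
  hB3b : ∀ l : ℝ, l ∉ closure (Del p b d '' Ici 0) → (l : EReal) ≠ L →
    ∃ tl ≥ (0 : ℝ), (∀ t ≥ tl, d t ≠ l) ∧
      ∃ M : ℝ, ∀ t ≥ tl, ‖rho p b c d (l : ℂ) t‖ ≤ M ∧ ‖kap p q b c d (l : ℂ) t‖ ≤ M ∧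
        ‖(pir p b d (l : ℂ) t)⁻¹‖ ≤ M

/-- **Assumption (C)**: the limits of `ρ/π` and `κ/π` at `∞` exist and are finite. -/
def AssC (p q d : ℝ → ℝ) (b c : ℝ → ℂ) (L : EReal) : Prop :=
  ∀ l : ℝ, l ∉ closure (Del p b d '' Ici 0) → (l : EReal) ≠ L →
    (∃ z : ℂ, Tendsto (fun t => rho p b c d (l : ℂ) t / pir p b d (l : ℂ) t) atTop (nhds z)) ∧
    (∃ z : ℂ, Tendsto (fun t => kap p q b c d (l : ℂ) t / pir p b d (l : ℂ) t) atTop (nhds z))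

/-- The singular part of the essential spectrum, described via the limits of `ρ/π`, `κ/π`. -/
def singSet (p q d : ℝ → ℝ) (b c : ℝ → ℂ) (L : EReal) : Set ℝ :=
  {l : ℝ | l ∉ closure (Del p b d '' Ici 0) ∧ (l : EReal) ≠ L ∧
    ∃ r k : ℝ, Tendsto (fun t => rho p b c d (l : ℂ) t / pir p b d (l : ℂ) t)
        atTop (nhds (r : ℂ)) ∧
      Tendsto (fun t => kap p q b c d (l : ℂ) t / pir p b d (l : ℂ) t) atTop (nhds (k : ℂ)) ∧
      r ^ 2 - 4 * k ≥ 0}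

/-- **(C1)**: finite limits of `π` and `∂π/∂t` at `∞`, with nonzero limit of `π`. -/
structure AssC1 (p q d : ℝ → ℝ) (b c : ℝ → ℂ) (L : EReal) : Prop where
  hlim : ∀ l : ℝ, l ∉ closure (Del p b d '' Ici 0) → (l : EReal) ≠ L →
    (∃ z : ℂ, Tendsto (pir p b d (l : ℂ)) atTop (nhds z)) ∧
    (∃ z : ℂ, Tendsto (fun t => deriv (pir p b d (l : ℂ)) t) atTop (nhds z))
  hne : ∃ l : ℝ, l ∉ closure (Del p b d '' Ici 0) ∧ (l : EReal) ≠ L ∧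
    ∃ z : ℂ, z ≠ 0 ∧ Tendsto (pir p b d (l : ℂ)) atTop (nhds z)

/-- **(C2)**: finite limits of `b̄c/(d−λ)` and its derivative at `∞`. -/
def AssC2 (b c : ℝ → ℂ) (d : ℝ → ℝ) (L : EReal) : Prop :=
  ∀ l : ℝ, (l : EReal) ≠ L →
    (∃ z : ℂ, Tendsto (fun t => (starRingEnd ℂ) (b t) * c t / ((d t : ℂ) - (l : ℂ)))
      atTop (nhds z)) ∧
    (∃ z : ℂ, Tendsto
      (fun t => deriv (fun s => (starRingEnd ℂ) (b s) * c s / ((d s : ℂ) - (l : ℂ))) t)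
      atTop (nhds z))

/-- **(C3)**: finite limit of `q − λ − |c|²/(d−λ)` at `∞`. -/
def AssC3 (q d : ℝ → ℝ) (c : ℝ → ℂ) (L : EReal) : Prop :=
  ∀ l : ℝ, (l : EReal) ≠ L →
    ∃ z : ℂ, Tendsto (fun t => (q t : ℂ) - (l : ℂ) - (‖c t‖ : ℂ) ^ 2 / ((d t : ℂ) - (l : ℂ)))
      atTop (nhds z)

theorem ContDiffOn.eventually_differentiableAt_atTop {E : Type*} [NormedAddCommGroup E]
    [NormedSpace ℝ E] {f : ℝ → E} {n : WithTop ℕ∞} {a : ℝ} (hf : ContDiffOn ℝ n f (Ici a))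
    (hn : n ≠ 0) : ∀ᶠ t in atTop, DifferentiableAt ℝ f t := by
  filter_upwards [eventually_gt_atTop a] with t ht
  exact (hf.differentiableOn hn).differentiableAt (Ici_mem_nhds ht)

theorem deriv_ofReal_comp (f : ℝ → ℝ) (t : ℝ) :
    deriv (fun s => (f s : ℂ)) t = deriv f t := by
  by_cases hf : DifferentiableAt ℝ f t
  · exact hf.hasDerivAt.ofReal_comp.deriv
  · have hf' : ¬DifferentiableAt ℝ (fun s => (f s : ℂ)) t := fun h =>
      hf (by simpa [Function.comp_def] using Complex.differentiable_re.differentiableAt.comp t h)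
    rw [deriv_zero_of_not_differentiableAt hf, deriv_zero_of_not_differentiableAt hf',
      Complex.ofReal_zero]

theorem eq_zero_of_tendsto_deriv_of_eventually_abs_le {f : ℝ → ℝ} {z C : ℝ}
    (hdiff : ∀ᶠ t in atTop, DifferentiableAt ℝ f t) (hbdd : ∀ᶠ t in atTop, |f t| ≤ C)
    (hf' : Tendsto (deriv f) atTop (𝓝 z)) : z = 0 := by
  by_contra hz
  have hz₀ : 0 < |z| / 2 := half_pos (abs_pos.mpr hz)
  have hlow : ∀ᶠ t in atTop, |z| / 2 ≤ |deriv f t| :=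
    hf'.abs.eventually (eventually_ge_nhds (half_lt_self (abs_pos.mpr hz)))
  obtain ⟨T, hT⟩ := eventually_atTop.1 (hdiff.and (hbdd.and hlow))
  have hC : 0 ≤ C := (abs_nonneg _).trans (hT T le_rfl).2.1
  -- over an interval of length `h` the mean value theorem forces `f` to move by `2C + 1`
  set h := (2 * C + 1) / (|z| / 2) with hh
  have hh₀ : 0 < h := div_pos (by linarith) hz₀
  have hzh : |z| / 2 * h = 2 * C + 1 := by rw [hh]; field_simp
  obtain ⟨x, hx, hslope⟩ := exists_deriv_eq_slope f (lt_add_of_pos_right T hh₀)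
    (fun t ht => (hT t ht.1).1.continuousAt.continuousWithinAt)
    (fun t ht => (hT t ht.1.le).1.differentiableWithinAt)
  have hmove : 2 * C + 1 ≤ |f (T + h) - f T| := by
    have := (hT x hx.1.le).2.2
    rw [hslope, add_sub_cancel_left, abs_div, abs_of_pos hh₀, le_div_iff₀ hh₀] at this
    linarith
  have := abs_sub (f (T + h)) (f T)
  linarith [(hT (T + h) (by linarith)).2.1, (hT T le_rfl).2.1]

theorem eq_zero_of_tendsto_logDeriv {F : ℝ → ℝ} {a m C : ℝ} (hm : 0 < m)
    (hdiff : ∀ᶠ t in atTop, DifferentiableAt ℝ F t)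
    (hbdd : ∀ᶠ t in atTop, m ≤ |F t| ∧ |F t| ≤ C)
    (hlim : Tendsto (logDeriv F) atTop (𝓝 a)) : a = 0 := by
  have hlog : ∀ᶠ t in atTop, HasDerivAt (fun s => Real.log (F s)) (logDeriv F t) t := by
    filter_upwards [hdiff, hbdd] with t h₁ h₂
    exact h₁.hasDerivAt.log (abs_pos.mp (hm.trans_le h₂.1))
  refine eq_zero_of_tendsto_deriv_of_eventually_abs_le (C := max |Real.log m| |Real.log C|)
    (hlog.mono fun t ht => ht.differentiableAt) ?_
    (hlim.congr' (hlog.mono fun t ht => ht.deriv.symm))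
  filter_upwards [hbdd] with t ⟨h₁, h₂⟩
  rw [← Real.log_abs]
  exact abs_le_max_abs_abs (Real.log_le_log hm h₁) (Real.log_le_log (hm.trans_le h₁) h₂)

theorem eq_zero_of_tendsto_deriv_div {F G : ℝ → ℝ} {g c : ℝ}
    (hF : ∀ᶠ t in atTop, DifferentiableAt ℝ F t) (hG : ∀ᶠ t in atTop, DifferentiableAt ℝ G t)
    (hne : ∀ᶠ t in atTop, F t ≠ 0) (hFlog : Tendsto (logDeriv F) atTop (𝓝 0))
    (hGF : Tendsto (fun t => G t / F t) atTop (𝓝 g))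
    (hG' : Tendsto (fun t => deriv G t / F t) atTop (𝓝 c)) : c = 0 := by
  have hquot : ∀ᶠ t in atTop, HasDerivAt (fun s => G s / F s)
      (deriv G t / F t - G t / F t * logDeriv F t) t := by
    filter_upwards [hF, hG, hne] with t h₁ h₂ h₃
    refine (h₂.hasDerivAt.div h₁.hasDerivAt h₃).congr_deriv ?_
    rw [logDeriv_apply]
    field_simp
  refine eq_zero_of_tendsto_deriv_of_eventually_abs_le (hquot.mono fun t ht => ht.differentiableAt)
    (hGF.abs.eventually (eventually_le_nhds (lt_add_one |g|))) ?_
  simpa using (hG'.sub (hGF.mul hFlog)).congr' (hquot.mono fun t ht => ht.deriv.symm)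

theorem EReal.eventually_abs_add_one_le_mul_abs_sub {d : ℝ → ℝ} {L : EReal}
    (hd : Tendsto (fun t => (d t : EReal)) atTop (𝓝 L)) {μ : ℝ} (hμ : (μ : EReal) ≠ L) :
    ∃ K > (0 : ℝ), ∀ᶠ t in atTop, |d t| + 1 ≤ K * |d t - μ| := by
  induction L using EReal.rec with
  | top =>
    refine ⟨4, by norm_num, ?_⟩
    filter_upwards [EReal.tendsto_nhds_top_iff_real.mp hd (2 * |μ| + 2)] with t ht
    have ht' : 2 * |μ| + 2 < d t := by exact_mod_cast ht
    rw [abs_of_pos (by linarith [abs_nonneg μ])]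
    linarith [le_abs_self (d t - μ), le_abs_self μ, abs_nonneg μ]
  | bot =>
    refine ⟨4, by norm_num, ?_⟩
    filter_upwards [EReal.tendsto_nhds_bot_iff_real.mp hd (-(2 * |μ| + 2))] with t ht
    have ht' : d t < -(2 * |μ| + 2) := by exact_mod_cast ht
    rw [abs_of_neg (by linarith [abs_nonneg μ])]
    linarith [neg_le_abs (d t - μ), neg_le_abs μ, abs_nonneg μ]
  | coe y =>
    -- near `y`, `|d|` stays below `|y| + ε` and `|d - μ|` above `ε := |μ - y| / 2`
    set ε := |μ - y| / 2 with hε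
    have hε₀ : 0 < ε := half_pos (abs_pos.mpr (sub_ne_zero.mpr fun h => hμ (by rw [h])))
    refine ⟨(|y| + ε + 1) / ε, by positivity, ?_⟩
    filter_upwards [Metric.tendsto_nhds.mp (EReal.tendsto_coe.mp hd) ε hε₀] with t ht
    rw [Real.dist_eq] at ht
    have hdy : |d t| ≤ |y| + ε := by linarith [abs_sub_abs_le_abs_sub (d t) y]
    have hdμ : ε ≤ |d t - μ| := by
      linarith [abs_sub_le μ (d t) y, abs_sub_comm (d t) μ]
    calc |d t| + 1 ≤ (|y| + ε + 1) / ε * ε := by rw [div_mul_cancel₀ _ hε₀.ne']; linarith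
      _ ≤ (|y| + ε + 1) / ε * |d t - μ| := by gcongr

/-- `π(t, λ)` for real `λ`, where it is real. -/
def pirReal (p : ℝ → ℝ) (b : ℝ → ℂ) (d : ℝ → ℝ) (l : ℝ) (t : ℝ) : ℝ :=
  p t - ‖b t‖ ^ 2 / (d t - l)

/-- The function `b̄ c / (d − λ)` differentiated in `κ`. -/
def coupling (b c : ℝ → ℂ) (d : ℝ → ℝ) (l : ℝ) (t : ℝ) : ℂ :=
  (starRingEnd ℂ) (b t) * c t / ((d t : ℂ) - (l : ℂ))

theorem pir_ofReal (p : ℝ → ℝ) (b : ℝ → ℂ) (d : ℝ → ℝ) (l : ℝ) :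
    pir p b d (l : ℂ) = fun t => (pirReal p b d l t : ℂ) := by
  ext t
  simp only [pir, pirReal]
  push_cast
  ring

section

variable {p q d : ℝ → ℝ} {b c : ℝ → ℂ} {L : EReal} {l : ℝ}

theorem coupling_im (t : ℝ) :
    (coupling b c d l t).im = -(b t * (starRingEnd ℂ) (c t)).im / (d t - l) := by
  rw [coupling, ← Complex.ofReal_sub, Complex.div_ofReal_im]
  simp only [Complex.mul_im, Complex.conj_re, Complex.conj_im]
  ring

theorem rho_re (t : ℝ) : (rho p b c d (l : ℂ) t).re = 2 * (coupling b c d l t).im := by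
  rw [rho, coupling_im, pir_ofReal, deriv_ofReal_comp, ← Complex.ofReal_sub]
  simp only [Complex.add_re, Complex.div_ofReal_re, Complex.neg_re, Complex.mul_re, Complex.I_re,
    Complex.I_im, Complex.ofReal_re, Complex.ofReal_im, Complex.re_ofNat, Complex.im_ofNat]
  ring

theorem rho_im (t : ℝ) : (rho p b c d (l : ℂ) t).im = deriv (pirReal p b d l) t := by
  rw [rho, pir_ofReal, deriv_ofReal_comp, ← Complex.ofReal_sub]
  simp [-Complex.ofReal_sub]

theorem kap_im {t : ℝ} (hH : DifferentiableAt ℝ (coupling b c d l) t) :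
    (kap p q b c d (l : ℂ) t).im = deriv (fun s => (coupling b c d l s).im) t := by
  have him : HasDerivAt (fun s => (coupling b c d l s).im) (deriv (coupling b c d l) t).im t :=
    Complex.imCLM.hasFDerivAt.comp_hasDerivAt t hH.hasDerivAt
  have hreal : (q t : ℂ) - l - (‖c t‖ : ℂ) ^ 2 / ((d t : ℂ) - l)
      = ((q t - l - ‖c t‖ ^ 2 / (d t - l) : ℝ) : ℂ) := by push_cast; ring
  rw [him.deriv, kap, hreal, Complex.add_im, Complex.ofReal_im, zero_add]
  rfl

theorem AssA.eventually_differentiableAt_pirReal (hA : AssA p q d b c)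
    (hdl : ∀ᶠ t in atTop, d t ≠ l) : ∀ᶠ t in atTop, DifferentiableAt ℝ (pirReal p b d l) t := by
  filter_upwards [ContDiffOn.eventually_differentiableAt_atTop hA.hp two_ne_zero,
    ContDiffOn.eventually_differentiableAt_atTop hA.hb two_ne_zero,
    ContDiffOn.eventually_differentiableAt_atTop hA.hd two_ne_zero, hdl] with t hp hb hd ht
  exact hp.sub ((hb.norm_sq ℝ).div (hd.sub_const l) (sub_ne_zero.mpr ht))

theorem AssA.eventually_differentiableAt_coupling (hA : AssA p q d b c)
    (hdl : ∀ᶠ t in atTop, d t ≠ l) : ∀ᶠ t in atTop, DifferentiableAt ℝ (coupling b c d l) t := by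
  filter_upwards [ContDiffOn.eventually_differentiableAt_atTop hA.hb two_ne_zero,
    ContDiffOn.eventually_differentiableAt_atTop hA.hc one_ne_zero,
    ContDiffOn.eventually_differentiableAt_atTop hA.hd two_ne_zero, hdl] with t hb hc hd ht
  have hne : (d t : ℂ) - l ≠ 0 := by exact_mod_cast sub_ne_zero.mpr ht
  exact ((Complex.differentiable_conj.differentiableAt.comp t hb).mul hc).div
    ((Complex.differentiable_ofReal.differentiableAt.comp t hd).sub_const _) hne

theorem AssB.eventually_abs_pirReal_le (hB : AssB p q d b c L) (hl : (l : EReal) ≠ L) :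
    ∃ C : ℝ, ∀ᶠ t in atTop, |pirReal p b d l t| ≤ C := by
  obtain ⟨β, -, γ, -, hbc⟩ := hB.hB2
  obtain ⟨l₀, hl₀, t₀, -, hd₀, M₀, hM₀⟩ := hB.hB3a
  obtain ⟨K₀, hK₀, hev₀⟩ := EReal.eventually_abs_add_one_le_mul_abs_sub hB.hB1 hl₀
  obtain ⟨K, hK, hev⟩ := EReal.eventually_abs_add_one_le_mul_abs_sub hB.hB1 hl
  refine ⟨M₀ + β ^ 2 * K₀ * K * |l₀ - l|, ?_⟩
  filter_upwards [hev₀, hev, eventually_ge_atTop t₀, eventually_ge_atTop 0] with t h₀ h ht₀ ht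
  have hx₀ : 0 < |d t - l₀| := abs_pos.mpr (sub_ne_zero.mpr (hd₀ t ht₀))
  have hx : 0 < |d t - l| := pos_of_mul_pos_right (by linarith [abs_nonneg (d t)]) hK.le
  -- `π(λ)` and `π(λ₀)` differ by `|b|² (λ₀ - λ) / ((d - λ₀) (d - λ))`, which (B2) keeps bounded
  have hshift : pirReal p b d l t
      = pirReal p b d l₀ t + ‖b t‖ ^ 2 * (l₀ - l) / ((d t - l₀) * (d t - l)) := by
    have hne₀ := abs_pos.mp hx₀
    have hne := abs_pos.mp hx
    unfold pirReal
    field_simp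
    ring
  have hπ₀ : |pirReal p b d l₀ t| ≤ M₀ := by simpa [pir_ofReal] using hM₀ t ht₀
  have hb : ‖b t‖ ^ 2 ≤ β ^ 2 * K₀ * K * (|d t - l₀| * |d t - l|) :=
    calc ‖b t‖ ^ 2 ≤ (β * (|d t| + 1)) ^ 2 := pow_le_pow_left₀ (norm_nonneg _) (hbc t ht).1 2
      _ = β ^ 2 * ((|d t| + 1) * (|d t| + 1)) := by ring
      _ ≤ β ^ 2 * ((K₀ * |d t - l₀|) * (K * |d t - l|)) := by gcongr
      _ = β ^ 2 * K₀ * K * (|d t - l₀| * |d t - l|) := by ring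
  have hquot : |‖b t‖ ^ 2 * (l₀ - l) / ((d t - l₀) * (d t - l))| ≤ β ^ 2 * K₀ * K * |l₀ - l| := by
    rw [abs_div, abs_mul, abs_mul, abs_of_nonneg (sq_nonneg _), div_le_iff₀ (mul_pos hx₀ hx)]
    exact (mul_le_mul_of_nonneg_right hb (abs_nonneg _)).trans_eq (by ring)
  rw [hshift]
  exact (abs_add_le _ _).trans (add_le_add hπ₀ hquot)

theorem im_eq_zero_of_tendsto_div_pir (hA : AssA p q d b c) (hB : AssB p q d b c L)
    (hl₁ : l ∉ closure (Del p b d '' Ici 0)) (hl₂ : (l : EReal) ≠ L) {z₁ z₂ : ℂ}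
    (hz₁ : Tendsto (fun t => rho p b c d l t / pir p b d l t) atTop (𝓝 z₁))
    (hz₂ : Tendsto (fun t => kap p q b c d l t / pir p b d l t) atTop (𝓝 z₂)) :
    z₁.im = 0 ∧ z₂.im = 0 := by
  by_cases hzero : ∃ᶠ t in atTop, pirReal p b d l t = 0
  · -- where `π` vanishes, both quotients take the junk value `0`
    have hjunk {f : ℝ → ℂ} {z : ℂ} (hf : Tendsto (fun t => f t / pir p b d l t) atTop (𝓝 z)) :
        z = 0 :=
      tendsto_nhds_unique_of_frequently_eq hf tendsto_const_nhds
        (hzero.mono fun t ht => by simp [pir_ofReal, ht])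
    simp [hjunk hz₁, hjunk hz₂]
  obtain ⟨tl, -, hdl, M, hM⟩ := hB.hB3b l hl₁ hl₂
  obtain ⟨C, hC⟩ := hB.eventually_abs_pirReal_le hl₂
  have hne : ∀ᶠ t in atTop, pirReal p b d l t ≠ 0 := not_frequently.mp hzero
  have hdl' : ∀ᶠ t in atTop, d t ≠ l := eventually_atTop.2 ⟨tl, hdl⟩
  have hF := hA.eventually_differentiableAt_pirReal hdl'
  have hH := hA.eventually_differentiableAt_coupling hdl'
  have hbdd : ∀ᶠ t in atTop, (|M| + 1)⁻¹ ≤ |pirReal p b d l t| ∧ |pirReal p b d l t| ≤ C := by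
    filter_upwards [hne, hC, eventually_ge_atTop tl] with t h₀ hCt ht
    have hinv := (hM t ht).2.2
    simp only [pir_ofReal, norm_inv, Complex.norm_real, Real.norm_eq_abs] at hinv
    exact ⟨inv_le_of_inv_le₀ (abs_pos.mpr h₀) (hinv.trans ((le_abs_self M).trans (by linarith))),
      hCt⟩
  have hlog : Tendsto (logDeriv (pirReal p b d l)) atTop (𝓝 z₁.im) :=
    ((Complex.continuous_im.tendsto z₁).comp hz₁).congr fun t => by
      simp [pir_ofReal, rho_im, logDeriv_apply]
  have him₁ : z₁.im = 0 := eq_zero_of_tendsto_logDeriv (by positivity) hF hbdd hlog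
  refine ⟨him₁, eq_zero_of_tendsto_deriv_div (G := fun s => (coupling b c d l s).im) hF
    (hH.mono fun t h => Complex.differentiable_im.differentiableAt.comp t h) hne (him₁ ▸ hlog)
    (g := z₁.re / 2) ?_ ?_⟩
  · refine (((Complex.continuous_re.tendsto z₁).comp hz₁).div_const 2).congr fun t => ?_
    simp only [pir_ofReal, Function.comp_apply, Complex.div_ofReal_re, rho_re]
    ring
  · refine ((Complex.continuous_im.tendsto z₂).comp hz₂).congr' ?_
    filter_upwards [hH] with t ht
    simp [pir_ofReal, kap_im ht]

end

/-- Under Assumptions (A), (B), (C), for every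
`λ ∈ ℝ \ (closure(Δ([0,∞))) ∪ {d_∞})` the limits `(∂π/∂t)/π → 0`, and `ρ/π`, `κ/π` have
finite *real* limits at `∞`. -/
theorem limits_real_of_AssC (p q d : ℝ → ℝ) (b c : ℝ → ℂ) (L : EReal)
    (hA : AssA p q d b c) (hB : AssB p q d b c L) (hC : AssC p q d b c L)
    (l : ℝ) (hl1 : l ∉ closure (Del p b d '' Ici 0)) (hl2 : (l : EReal) ≠ L) :
    Tendsto (fun t => deriv (pir p b d (l : ℂ)) t / pir p b d (l : ℂ) t) atTop (nhds 0) ∧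
    (∃ r : ℝ, Tendsto (fun t => rho p b c d (l : ℂ) t / pir p b d (l : ℂ) t)
      atTop (nhds (r : ℂ))) ∧
    (∃ r : ℝ, Tendsto (fun t => kap p q b c d (l : ℂ) t / pir p b d (l : ℂ) t)
      atTop (nhds (r : ℂ))) := by
  obtain ⟨⟨z₁, hz₁⟩, ⟨z₂, hz₂⟩⟩ := hC l hl1 hl2
  obtain ⟨him₁, him₂⟩ := im_eq_zero_of_tendsto_div_pir hA hB hl1 hl2 hz₁ hz₂
  refine ⟨?_, ⟨z₁.re, ?_⟩, ⟨z₂.re, ?_⟩⟩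
  · -- `π'/π` is the imaginary part of `ρ/π`
    have hlim := (Complex.continuous_ofReal.tendsto _).comp
      ((Complex.continuous_im.tendsto z₁).comp hz₁)
    rw [him₁, Complex.ofReal_zero] at hlim
    refine hlim.congr fun t => ?_
    simp [pir_ofReal, rho_im, deriv_ofReal_comp]
  · rwa [show (z₁.re : ℂ) = z₁ from Complex.ext (by simp) (by simp [him₁])]
  · rwa [show (z₂.re : ℂ) = z₂ from Complex.ext (by simp) (by simp [him₂])]

end PaperEss
end
end

section
/- Assume Assumptions (A), (B1), (B2), (B3a), and (B3b), and set δ₋ := inf_{t≥0} Δ(t), δ₊ := sup_{t≥0} Δ(t), and σ_ess^reg(A) := closure(Δ([0,∞))). Then: (i) if d_∞ ∈ ℝ, then δ₊ ∈ ℝ and σ_ess^reg(A) = [δ₋,δ₊] with δ₋ ∈ ℝ if liminf_{t→∞} p(t) > 0, while σ_ess^reg(A) = (−∞,δ₊] if liminf_{t→∞} p(t) = 0; (ii) if d_∞ = +∞, then σ_ess^reg(A) = [δ₋,δ₊] if liminf_{t→∞} p(t)/d(t) > 0, and, in case Δ([0,∞)) ≠ ℝ, there exists s ∈ ℝ such that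 σ_ess^reg(A) = [s,+∞) if liminf_{t→∞} p(t)/d(t) = 0 and liminf_{t→∞}(p(t)−|b(t)|²/d(t)) > 0, while σ_ess^reg(A) = (−∞,s] if liminf_{t→∞} p(t)/d(t) = 0 and limsup_{t→∞}(p(t)−|b(t)|²/d(t)) < 0; (iii) if d_∞ = −∞, then σ_ess^reg(A) = (−∞,δ₊]. -/
noncomputable section
open MeasureTheory Set Filter Topology

namespace PaperEss

/-! ### Auxiliary lemmas -/

lemma closure_eq_Icc' {S : Set ℝ} (hne : S.Nonempty) (hoc : S.OrdConnected)
    (hb : BddBelow S) (ha : BddAbove S) :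
    closure S = Icc (sInf S) (sSup S) := by
  apply Subset.antisymm
  · exact closure_minimal (fun x hx => ⟨csInf_le hb hx, le_csSup ha hx⟩) isClosed_Icc
  · rintro y ⟨h1, h2⟩
    rcases eq_or_lt_of_le h1 with rfl | h1
    · exact csInf_mem_closure hne hb
    rcases eq_or_lt_of_le h2 with rfl | h2
    · exact csSup_mem_closure hne ha
    obtain ⟨a, haS, hay⟩ := exists_lt_of_csInf_lt hne h1
    obtain ⟨z, hzS, hyz⟩ := exists_lt_of_lt_csSup hne h2
    exact subset_closure (hoc.out haS hzS ⟨hay.le, hyz.le⟩)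

lemma closure_eq_Iic' {S : Set ℝ} (hne : S.Nonempty) (hoc : S.OrdConnected)
    (ha : BddAbove S) (hb : ¬ BddBelow S) :
    closure S = Iic (sSup S) := by
  apply Subset.antisymm
  · exact closure_minimal (fun x hx => le_csSup ha hx) isClosed_Iic
  · intro y (hy : y ≤ sSup S)
    obtain ⟨a, haS, hay⟩ : ∃ a ∈ S, a < y := by
      by_contra h
      push_neg at h
      exact hb ⟨y, fun x hx => le_of_not_gt fun hlt => absurd hlt (not_lt.2 (h x hx))⟩
    rcases eq_or_lt_of_le hy with rfl | hy
    · exact csSup_mem_closure hne ha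
    obtain ⟨z, hzS, hyz⟩ := exists_lt_of_lt_csSup hne hy
    exact subset_closure (hoc.out haS hzS ⟨hay.le, hyz.le⟩)

lemma closure_eq_Ici' {S : Set ℝ} (hne : S.Nonempty) (hoc : S.OrdConnected)
    (hb : BddBelow S) (ha : ¬ BddAbove S) :
    closure S = Ici (sInf S) := by
  apply Subset.antisymm
  · exact closure_minimal (fun x hx => csInf_le hb hx) isClosed_Ici
  · intro y (hy : sInf S ≤ y)
    obtain ⟨z, hzS, hyz⟩ : ∃ z ∈ S, y < z := by
      by_contra h
      push_neg at h
      exact ha ⟨y, fun x hx => h x hx⟩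
    rcases eq_or_lt_of_le hy with rfl | hy
    · exact csInf_mem_closure hne hb
    obtain ⟨a, haS, hay⟩ := exists_lt_of_csInf_lt hne hy
    exact subset_closure (hoc.out haS hzS ⟨hay.le, hyz.le⟩)

lemma eq_univ_of_unbdd' {S : Set ℝ} (hoc : S.OrdConnected)
    (ha : ¬ BddAbove S) (hb : ¬ BddBelow S) : S = univ := by
  ext x
  simp only [mem_univ, iff_true]
  obtain ⟨a, haS, hax⟩ : ∃ a ∈ S, a < x := by
    by_contra h; push_neg at h
    exact hb ⟨x, fun z hz => (le_of_not_gt fun hlt => absurd hlt (not_lt.2 (h z hz)))⟩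
  obtain ⟨z, hzS, hxz⟩ : ∃ z ∈ S, x < z := by
    by_contra h; push_neg at h
    exact ha ⟨x, fun z hz => h z hz⟩
  exact hoc.out haS hzS ⟨hax.le, hxz.le⟩

lemma bddAbove_image_of_eventually' {f : ℝ → ℝ} (hf : ContinuousOn f (Ici 0))
    {C T : ℝ} (h : ∀ t, T ≤ t → f t ≤ C) : BddAbove (f '' Ici 0) := by
  obtain ⟨M, hM⟩ : BddAbove (f '' Icc 0 (max T 0)) :=
    (isCompact_Icc).bddAbove_image (hf.mono (fun x hx => hx.1))
  refine ⟨max M C, ?_⟩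
  rintro y ⟨t, ht, rfl⟩
  rcases le_total t (max T 0) with hle | hle
  · exact le_max_of_le_left (hM ⟨t, ⟨ht, hle⟩, rfl⟩)
  · exact le_max_of_le_right (h t (le_trans (le_max_left _ _) hle))

lemma bddBelow_image_of_eventually' {f : ℝ → ℝ} (hf : ContinuousOn f (Ici 0))
    {C T : ℝ} (h : ∀ t, T ≤ t → C ≤ f t) : BddBelow (f '' Ici 0) := by
  obtain ⟨M, hM⟩ : BddBelow (f '' Icc 0 (max T 0)) :=
    (isCompact_Icc).bddBelow_image (hf.mono (fun x hx => hx.1))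
  refine ⟨min M C, ?_⟩
  rintro y ⟨t, ht, rfl⟩
  rcases le_total t (max T 0) with hle | hle
  · exact min_le_of_left_le (hM ⟨t, ⟨ht, hle⟩, rfl⟩)
  · exact min_le_of_right_le (h t (le_trans (le_max_left _ _) hle))

lemma pir_real (p : ℝ → ℝ) (b : ℝ → ℂ) (d : ℝ → ℝ) (l : ℝ) (t : ℝ) :
    pir p b d (l : ℂ) t = ((p t - ‖b t‖ ^ 2 / (d t - l) : ℝ) : ℂ) := by
  unfold pir; push_cast; ring

lemma norm_pir (p : ℝ → ℝ) (b : ℝ → ℂ) (d : ℝ → ℝ) (l : ℝ) (t : ℝ) :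
    ‖pir p b d (l : ℂ) t‖ = |p t - ‖b t‖ ^ 2 / (d t - l)| := by
  rw [pir_real, Complex.norm_real, Real.norm_eq_abs]

/-- Key Schur identity: `Δ − λ = (d − λ) π / p`. -/
lemma del_identity {p : ℝ → ℝ} {b : ℝ → ℂ} {d : ℝ → ℝ} {l t : ℝ}
    (hp : 0 < p t) (hd : d t - l ≠ 0) :
    Del p b d t - l = (d t - l) * (p t - ‖b t‖ ^ 2 / (d t - l)) / p t := by
  unfold Del; field_simp; ring

/-- Form of the regular part `σ_ess^reg(A) = closure (Δ([0,∞)))`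
under Assumptions (A), (B1), (B2), (B3a), (B3b); here `δ₋ = sInf`, `δ₊ = sSup` of the
range of `Δ`.  "liminf > 0" is expressed as "eventually bounded away from 0" and
"liminf = 0" as "frequently below every ε > 0" (the functions in question being
positive resp. bounded below in each case). -/
theorem regular_part_form (p q d : ℝ → ℝ) (b c : ℝ → ℂ) (L : EReal)
    (hA : AssA p q d b c) (hB : AssB p q d b c L) :
    -- (i) d_∞ ∈ ℝ
    (∀ r : ℝ, L = (r : EReal) →
      BddAbove (Del p b d '' Ici 0) ∧
      ((∃ ε > (0 : ℝ), ∀ᶠ t in atTop, ε ≤ p t) →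
        BddBelow (Del p b d '' Ici 0) ∧
        closure (Del p b d '' Ici 0) =
          Icc (sInf (Del p b d '' Ici 0)) (sSup (Del p b d '' Ici 0))) ∧
      ((∀ ε > (0 : ℝ), ∃ᶠ t in atTop, p t < ε) →
        closure (Del p b d '' Ici 0) = Iic (sSup (Del p b d '' Ici 0)))) ∧
    -- (ii) d_∞ = +∞
    (L = ⊤ →
      ((∃ ε > (0 : ℝ), ∀ᶠ t in atTop, ε ≤ p t / d t) →
        BddBelow (Del p b d '' Ici 0) ∧ BddAbove (Del p b d '' Ici 0) ∧
        closure (Del p b d '' Ici 0) =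
          Icc (sInf (Del p b d '' Ici 0)) (sSup (Del p b d '' Ici 0))) ∧
      (Del p b d '' Ici 0 ≠ univ →
        (((∀ ε > (0 : ℝ), ∃ᶠ t in atTop, p t / d t < ε) ∧
            (∃ ε > (0 : ℝ), ∀ᶠ t in atTop, ε ≤ p t - ‖b t‖ ^ 2 / d t)) →
          ∃ s : ℝ, closure (Del p b d '' Ici 0) = Ici s) ∧
        (((∀ ε > (0 : ℝ), ∃ᶠ t in atTop, p t / d t < ε) ∧
            (∃ ε > (0 : ℝ), ∀ᶠ t in atTop, p t - ‖b t‖ ^ 2 / d t ≤ -ε)) →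
          ∃ s : ℝ, closure (Del p b d '' Ici 0) = Iic s))) ∧
    -- (iii) d_∞ = −∞
    (L = ⊥ →
      BddAbove (Del p b d '' Ici 0) ∧
      closure (Del p b d '' Ici 0) = Iic (sSup (Del p b d '' Ici 0))) := by
  have hDelC : ContinuousOn (Del p b d) (Ici 0) := by
    exact (hA.hd.continuousOn).sub
      (((hA.hb.continuousOn.norm.pow 2)).div hA.hp.continuousOn
        (fun t ht => (hA.hppos t ht).ne'))
  have hoc : (Del p b d '' Ici 0).OrdConnected :=
    (isPreconnected_Ici.image _ hDelC).ordConnected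
  have hne : (Del p b d '' Ici 0).Nonempty := ⟨_, ⟨0, self_mem_Ici, rfl⟩⟩
  have hDled : ∀ t ∈ Ici (0:ℝ), Del p b d t ≤ d t := fun t ht =>
    sub_le_self _ (div_nonneg (by positivity) (hA.hppos t ht).le)
  obtain ⟨β, hβ0, γ, hγ0, hbc⟩ := hB.hB2
  refine ⟨?_, ?_, ?_⟩
  · -- (i) d_∞ ∈ ℝ
    intro r hL
    have htend : Tendsto d atTop (nhds r) := EReal.tendsto_coe.mp (hL ▸ hB.hB1)
    have hub := htend.eventually (eventually_le_nhds (by linarith : r < r + 1))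
    have hlb := htend.eventually (eventually_ge_nhds (by linarith : r - 1 < r))
    have hBA : BddAbove (Del p b d '' Ici 0) := by
      obtain ⟨T, hT⟩ := eventually_atTop.mp (hub.and (eventually_ge_atTop (0:ℝ)))
      exact bddAbove_image_of_eventually' hDelC (C := r + 1) (T := T)
        (fun t ht => le_trans (hDled t (hT t ht).2) (hT t ht).1)
    refine ⟨hBA, ?_, ?_⟩
    · -- liminf p > 0
      rintro ⟨ε, hε, hev⟩
      have hBB : BddBelow (Del p b d '' Ici 0) := by
        obtain ⟨T, hT⟩ := eventually_atTop.mp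
          ((hev.and (hub.and hlb)).and (eventually_ge_atTop (0:ℝ)))
        apply bddBelow_image_of_eventually' hDelC
          (C := (r - 1) - (β * (|r| + 2)) ^ 2 / ε) (T := T)
        intro t ht
        obtain ⟨⟨hp1, hd1, hd2⟩, ht0⟩ := hT t ht
        have hdabs : |d t| ≤ |r| + 1 :=
          abs_le.mpr ⟨by linarith [neg_abs_le r], by linarith [le_abs_self r]⟩
        have hb1 : ‖b t‖ ≤ β * (|r| + 2) := by
          refine le_trans (hbc t ht0).1 ?_
          have : |d t| + 1 ≤ |r| + 2 := by linarith
          nlinarith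
        have hb2 : ‖b t‖ ^ 2 ≤ (β * (|r| + 2)) ^ 2 :=
          pow_le_pow_left₀ (norm_nonneg _) hb1 2
        have hdiv : ‖b t‖ ^ 2 / p t ≤ (β * (|r| + 2)) ^ 2 / ε :=
          div_le_div₀ (by positivity) hb2 hε hp1
        unfold Del
        linarith
      exact ⟨hBB, closure_eq_Icc' hne hoc hBB hBA⟩
    · -- liminf p = 0
      intro hfreq
      have hnBB : ¬ BddBelow (Del p b d '' Ici 0) := by
        rintro ⟨m, hm⟩
        have hm' : ∀ t ∈ Ici (0:ℝ), m ≤ Del p b d t := fun t ht => hm ⟨t, ht, rfl⟩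
        set l : ℝ := min m (r - 1) - 1 with hl
        have hlcl : l ∉ closure (Del p b d '' Ici 0) := by
          intro hmem
          have : m ≤ l := closure_minimal (fun y hy => hm hy) isClosed_Ici hmem
          have hlm : l ≤ m - 1 := by
            simp only [hl]; linarith [min_le_left m (r - 1)]
          linarith
        have hlL : (l : EReal) ≠ L := by
          rw [hL]
          intro h
          have : l = r := by exact_mod_cast h
          have := min_le_right m (r - 1)
          linarith
        obtain ⟨tl, htl0, hdnel, M, hM⟩ := hB.hB3b l hlcl hlL
        set M' : ℝ := max M 1 with hM'
        have hM'0 : (0:ℝ) < M' := lt_of_lt_of_le one_pos (le_max_right _ _)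
        have hε : (0:ℝ) < (2 * M')⁻¹ := by positivity
        obtain ⟨T, hT⟩ := eventually_atTop.mp (hlb.and (eventually_ge_atTop (0:ℝ)))
        obtain ⟨t, ht, hpt⟩ := frequently_atTop.mp (hfreq _ hε) (max T tl)
        have ht0 : (0:ℝ) ≤ t := (hT t (le_trans (le_max_left _ _) ht)).2
        have hdt : r - 1 ≤ d t := (hT t (le_trans (le_max_left _ _) ht)).1
        have htl : tl ≤ t := le_trans (le_max_right _ _) ht
        have hp0 : 0 < p t := hA.hppos t ht0
        have hDl : 1 ≤ d t - l := by
          have := min_le_right m (r - 1); simp only [hl]; linarith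
        set π : ℝ := p t - ‖b t‖ ^ 2 / (d t - l) with hπdef
        have hid : Del p b d t - l = (d t - l) * π / p t :=
          del_identity hp0 (by linarith)
        have hm'' : 1 ≤ Del p b d t - l := by
          have h1 := hm' t ht0
          have := min_le_left m (r - 1); simp only [hl]; linarith
        have hπpos : 0 < π := by
          by_contra hc
          push_neg at hc
          have : (d t - l) * π ≤ 0 := mul_nonpos_iff.mpr (Or.inl ⟨by linarith, hc⟩)
          have : (d t - l) * π / p t ≤ 0 := div_nonpos_of_nonpos_of_nonneg this hp0.le
          linarith
        have hπle : π < (2 * M')⁻¹ := by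
          have : 0 ≤ ‖b t‖ ^ 2 / (d t - l) := div_nonneg (by positivity) (by linarith)
          simp only [hπdef]; linarith
        have hinv : π⁻¹ ≤ M' := by
          have h1 := (hM t htl).2.2
          rw [norm_inv, norm_pir, abs_of_pos hπpos] at h1
          exact le_trans h1 (le_max_left _ _)
        have h2 : (1:ℝ) ≤ π * M' := by
          calc (1:ℝ) = π * π⁻¹ := (mul_inv_cancel₀ hπpos.ne').symm
            _ ≤ π * M' := mul_le_mul_of_nonneg_left hinv hπpos.le
        have h3 : π * M' < (2 * M')⁻¹ * M' := mul_lt_mul_of_pos_right hπle hM'0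
        have h4 : (2 * M')⁻¹ * M' = 1 / 2 := by
          rw [inv_mul_eq_div, div_eq_iff (by positivity : (0:ℝ) < 2 * M').ne']; ring
        have h5 : (1:ℝ) < 1 / 2 := by
          calc (1:ℝ) ≤ π * M' := h2
            _ < (2 * M')⁻¹ * M' := h3
            _ = 1 / 2 := h4
        norm_num at h5
      exact closure_eq_Iic' hne hoc hBA hnBB
  · -- (ii) d_∞ = +∞
    intro hL
    have hdtop : ∀ x : ℝ, ∀ᶠ t in atTop, x < d t := by
      have h := hL ▸ hB.hB1
      rw [EReal.tendsto_nhds_top_iff_real] at h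
      intro x
      exact (h x).mono (fun t ht => EReal.coe_lt_coe_iff.mp ht)
    refine ⟨?_, ?_⟩
    · -- liminf p/d > 0
      rintro ⟨ε, hε, hev⟩
      obtain ⟨l, hlL, tl, htl0, hdnel, M, hM⟩ := hB.hB3a
      obtain ⟨T, hT⟩ := eventually_atTop.mp
        ((hev.and (hdtop (|l| + 1))).and ((eventually_ge_atTop (0:ℝ)).and
          (eventually_ge_atTop tl)))
      have key : ∀ t, T ≤ t → |Del p b d t - l| ≤ 2 * M / ε := by
        intro t ht
        obtain ⟨⟨h1, h2⟩, h3, h4⟩ := hT t ht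
        have hd0 : 0 < d t := by linarith [abs_nonneg l]
        have hp0 : 0 < p t := hA.hppos t h3
        have hDl : 1 ≤ d t - l := by linarith [le_abs_self l]
        have hDl2 : d t - l ≤ 2 * d t := by linarith [neg_abs_le l]
        have hπ : |p t - ‖b t‖ ^ 2 / (d t - l)| ≤ M := by
          rw [← norm_pir]; exact hM t h4
        have hM0 : 0 ≤ M := le_trans (abs_nonneg _) hπ
        have hpd : ε * d t ≤ p t := (le_div_iff₀ hd0).mp h1
        rw [del_identity hp0 (by linarith), abs_div, abs_mul,
          abs_of_pos (by linarith : (0:ℝ) < d t - l), abs_of_pos hp0]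
        calc (d t - l) * |p t - ‖b t‖ ^ 2 / (d t - l)| / p t
            ≤ 2 * M * d t / (ε * d t) := by
              apply div_le_div₀ (by positivity) ?_ (by positivity) hpd
              calc (d t - l) * |p t - ‖b t‖ ^ 2 / (d t - l)|
                  ≤ (2 * d t) * M := mul_le_mul hDl2 hπ (abs_nonneg _) (by positivity)
                _ = 2 * M * d t := by ring
          _ = 2 * M / ε := mul_div_mul_right _ _ hd0.ne'
      have hBB : BddBelow (Del p b d '' Ici 0) :=
        bddBelow_image_of_eventually' hDelC (C := l - 2 * M / ε) (T := T)
          (fun t ht => by linarith [(abs_le.mp (key t ht)).1])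
      have hBA : BddAbove (Del p b d '' Ici 0) :=
        bddAbove_image_of_eventually' hDelC (C := l + 2 * M / ε) (T := T)
          (fun t ht => by linarith [(abs_le.mp (key t ht)).2])
      exact ⟨hBB, hBA, closure_eq_Icc' hne hoc hBB hBA⟩
    · -- liminf p/d = 0
      intro hne_univ
      constructor
      · rintro ⟨hfreq, ε₀, hε₀, hev⟩
        have hnBA : ¬ BddAbove (Del p b d '' Ici 0) := by
          rintro ⟨U, hU⟩
          set ε : ℝ := ε₀ / (|U| + 1) with hεdef
          have hεpos : 0 < ε := by positivity
          obtain ⟨T, hT⟩ := eventually_atTop.mp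
            ((hev.and (hdtop 1)).and (eventually_ge_atTop (0:ℝ)))
          obtain ⟨t, ht, hpd⟩ := frequently_atTop.mp (hfreq ε hεpos) T
          obtain ⟨⟨h1, h2⟩, h3⟩ := hT t ht
          have hd0 : (0:ℝ) < d t := by linarith
          have hp0 : 0 < p t := hA.hppos t h3
          have hU' : Del p b d t ≤ U := hU ⟨t, h3, rfl⟩
          have hBle : ‖b t‖ ^ 2 ≤ (p t - ε₀) * d t := by
            have hq : ‖b t‖ ^ 2 / d t ≤ p t - ε₀ := by linarith
            exact (div_le_iff₀ hd0).mp hq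
          have hple : p t < ε * d t := (div_lt_iff₀ hd0).mp hpd
          have hBp : ‖b t‖ ^ 2 / p t ≤ d t - ε₀ * d t / p t := by
            have h5 : ‖b t‖ ^ 2 / p t ≤ (p t - ε₀) * d t / p t :=
              (div_le_div_iff_of_pos_right hp0).mpr hBle
            have h6 : (p t - ε₀) * d t / p t = d t - ε₀ * d t / p t := by
              field_simp
            linarith [h6 ▸ h5]
          have h7 : |U| + 1 < ε₀ * d t / p t := by
            rw [lt_div_iff₀ hp0]
            calc (|U| + 1) * p t < (|U| + 1) * (ε * d t) :=
                  mul_lt_mul_of_pos_left hple (by positivity)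
              _ = ε₀ * d t := by rw [hεdef]; field_simp
          have : |U| + 1 < Del p b d t := by
            unfold Del; linarith
          linarith [le_abs_self U]
        have hBB : BddBelow (Del p b d '' Ici 0) := by
          by_contra h
          exact hne_univ (eq_univ_of_unbdd' hoc hnBA h)
        exact ⟨sInf (Del p b d '' Ici 0), closure_eq_Ici' hne hoc hBB hnBA⟩
      · rintro ⟨hfreq, ε₀, hε₀, hev⟩
        have hnBB : ¬ BddBelow (Del p b d '' Ici 0) := by
          rintro ⟨Lo, hLo⟩
          set ε : ℝ := ε₀ / (|Lo| + 1) with hεdef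
          have hεpos : 0 < ε := by positivity
          obtain ⟨T, hT⟩ := eventually_atTop.mp
            ((hev.and (hdtop 1)).and (eventually_ge_atTop (0:ℝ)))
          obtain ⟨t, ht, hpd⟩ := frequently_atTop.mp (hfreq ε hεpos) T
          obtain ⟨⟨h1, h2⟩, h3⟩ := hT t ht
          have hd0 : (0:ℝ) < d t := by linarith
          have hp0 : 0 < p t := hA.hppos t h3
          have hLo' : Lo ≤ Del p b d t := hLo ⟨t, h3, rfl⟩
          have hBge : (p t + ε₀) * d t ≤ ‖b t‖ ^ 2 := by
            have hq : p t + ε₀ ≤ ‖b t‖ ^ 2 / d t := by linarith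
            exact (le_div_iff₀ hd0).mp hq
          have hple : p t < ε * d t := (div_lt_iff₀ hd0).mp hpd
          have hBp : d t + ε₀ * d t / p t ≤ ‖b t‖ ^ 2 / p t := by
            have h5 : (p t + ε₀) * d t / p t ≤ ‖b t‖ ^ 2 / p t :=
              (div_le_div_iff_of_pos_right hp0).mpr hBge
            have h6 : (p t + ε₀) * d t / p t = d t + ε₀ * d t / p t := by
              field_simp
            linarith [h6 ▸ h5]
          have h7 : |Lo| + 1 < ε₀ * d t / p t := by
            rw [lt_div_iff₀ hp0]
            calc (|Lo| + 1) * p t < (|Lo| + 1) * (ε * d t) :=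
                  mul_lt_mul_of_pos_left hple (by positivity)
              _ = ε₀ * d t := by rw [hεdef]; field_simp
          have : Del p b d t < -(|Lo| + 1) := by
            unfold Del; linarith
          linarith [neg_abs_le Lo]
        have hBA : BddAbove (Del p b d '' Ici 0) := by
          by_contra h
          exact hne_univ (eq_univ_of_unbdd' hoc h hnBB)
        exact ⟨sSup (Del p b d '' Ici 0), closure_eq_Iic' hne hoc hBA hnBB⟩
  · -- (iii) d_∞ = −∞
    intro hL
    have hdbot : ∀ x : ℝ, ∀ᶠ t in atTop, d t < x := by
      have h := hL ▸ hB.hB1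
      rw [EReal.tendsto_nhds_bot_iff_real] at h
      intro x
      exact (h x).mono (fun t ht => EReal.coe_lt_coe_iff.mp ht)
    have hBA : BddAbove (Del p b d '' Ici 0) := by
      obtain ⟨T, hT⟩ := eventually_atTop.mp ((hdbot 0).and (eventually_ge_atTop (0:ℝ)))
      exact bddAbove_image_of_eventually' hDelC (C := 0) (T := T)
        (fun t ht => le_trans (hDled t (hT t ht).2) (hT t ht).1.le)
    have hnBB : ¬ BddBelow (Del p b d '' Ici 0) := by
      rintro ⟨m, hm⟩
      obtain ⟨T, hT⟩ := eventually_atTop.mp ((hdbot m).and (eventually_ge_atTop (0:ℝ)))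
      obtain ⟨hdm, hT0⟩ := hT T le_rfl
      have := hm ⟨T, hT0, rfl⟩
      have := hDled T hT0
      linarith
    exact ⟨hBA, closure_eq_Iic' hne hoc hBA hnBB⟩

end PaperEss
end
end

section
/- Let T be a densely defined symmetric operator in a Hilbert space H with inner product (·,·), let g₁,…,gₙ ∈ H, and set D₀ := {u ∈ D(T) : (u,gⱼ) = 0 for j = 1,…,n}. If x ∈ H is such that the linear functional u ↦ (Tu,x) is bounded on D₀ (i.e. there exists C ≥ 0 with |(Tu,x)| ≤ C‖u‖ for all u ∈ D₀), then x ∈ D(T*). -/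
noncomputable section
open MeasureTheory Set Filter Topology

namespace PaperEss

variable {H : Type*} [NormedAddCommGroup H] [InnerProductSpace ℂ H]

/-- The operator `T - λ` with the same domain as `T`. -/
def shift (T : H →ₗ.[ℂ] H) (l : ℂ) : H →ₗ.[ℂ] H :=
  ⟨T.domain, T.toFun - l • T.domain.subtype⟩

/-- A partially defined operator is Fredholm if its range is closed and both the kernel
and the orthogonal complement of the range are finite-dimensional. -/
def IsFredholm (T : H →ₗ.[ℂ] H) : Prop :=
  IsClosed (LinearMap.range T.toFun : Set H) ∧
    FiniteDimensional ℂ (LinearMap.ker T.toFun) ∧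
    FiniteDimensional ℂ ((LinearMap.range T.toFun)ᗮ)

/-- The essential spectrum: the set of `λ` such that `T - λ` is not Fredholm. -/
def essSpec (T : H →ₗ.[ℂ] H) : Set ℂ := {l | ¬IsFredholm (shift T l)}

/-- A partially defined operator is symmetric. -/
def IsSymm (T : H →ₗ.[ℂ] H) : Prop :=
  ∀ u v : T.domain, (inner ℂ (T u) (v : H) : ℂ) = inner ℂ (u : H) (T v)

/-- `λ` is an eigenvalue of `T`. -/
def IsEigen (T : H →ₗ.[ℂ] H) (l : ℂ) : Prop :=
  ∃ u : T.domain, (u : H) ≠ 0 ∧ T u = l • (u : H)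

/-- `λ` belongs to the resolvent set of `T`: `T - λ` is a bijection onto `H`
with bounded inverse. -/
def InResolvent (T : H →ₗ.[ℂ] H) (l : ℂ) : Prop :=
  Function.Injective (shift T l).toFun ∧ LinearMap.range (shift T l).toFun = ⊤ ∧
    ∃ C : ℝ, ∀ u : (shift T l).domain, ‖(u : H)‖ ≤ C * ‖shift T l u‖

variable [CompleteSpace H] in
/-- `T` has finite deficiency indices: `dim ker (T̄* ∓ i) < ∞`. -/
def FiniteDeficiency (T : H →ₗ.[ℂ] H) : Prop :=
  FiniteDimensional ℂ (LinearMap.ker (shift T.closure.adjoint Complex.I).toFun) ∧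
    FiniteDimensional ℂ (LinearMap.ker (shift T.closure.adjoint (-Complex.I)).toFun)

/-!
Extend the restriction of `u ↦ ⟪x, T u⟫` to the closed subspace `D₀` by Hahn–Banach to a
bounded functional on `D(T)`. The difference vanishes on `D₀ = ⋂ⱼ ker ⟪gⱼ, ·⟫`, so it is a linear
combination of the bounded functionals `⟪gⱼ, ·⟫`; hence `u ↦ ⟪x, T u⟫` is bounded on `D(T)`.
-/

theorem continuous_of_continuous_comp_iInf_ker {𝕜 E ι : Type*} [RCLike 𝕜]
    [SeminormedAddCommGroup E] [NormedSpace 𝕜 E] [Fintype ι] (L : ι → StrongDual 𝕜 E)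
    (φ : E →ₗ[𝕜] 𝕜)
    (hφ : Continuous (φ ∘ₗ (⨅ i, LinearMap.ker (L i : E →ₗ[𝕜] 𝕜)).subtype)) :
    Continuous φ := by
  set p := ⨅ i, LinearMap.ker (L i : E →ₗ[𝕜] 𝕜)
  obtain ⟨ψ, hψ, -⟩ := exists_extension_norm_eq p ⟨φ ∘ₗ p.subtype, hφ⟩
  have hker : p ≤ LinearMap.ker (φ - (ψ : E →ₗ[𝕜] 𝕜)) := fun u hu => by
    simpa [sub_eq_zero] using (hψ ⟨u, hu⟩).symm
  obtain ⟨c, hc⟩ :=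
    (Submodule.mem_span_range_iff_exists_fun 𝕜).1 (mem_span_of_iInf_ker_le_ker hker)
  have hφ_eq : (φ : E → 𝕜) = ⇑(ψ + ∑ i, c i • L i) := by
    ext u
    simpa [sub_eq_iff_eq_add'] using (LinearMap.congr_fun hc u).symm
  rw [hφ_eq]
  exact ContinuousLinearMap.continuous _

theorem mem_adjoint_domain_of_bounded_on_finite_codim_general
    {H : Type*} [NormedAddCommGroup H] [InnerProductSpace ℂ H] [CompleteSpace H]
    (T : H →ₗ.[ℂ] H)
    (n : ℕ) (g : Fin n → H) (x : H) (C : ℝ)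
    (hb : ∀ u : T.domain, (∀ j : Fin n, (inner ℂ (u : H) (g j) : ℂ) = 0) →
      ‖(inner ℂ (T u) x : ℂ)‖ ≤ C * ‖(u : H)‖) :
    x ∈ T.adjoint.domain := by
  rw [LinearPMap.mem_adjoint_domain_iff]
  refine continuous_of_continuous_comp_iInf_ker (fun j => (innerSL ℂ (g j)).comp T.domain.subtypeL)
    _ (AddMonoidHomClass.continuous_of_bound _ C ?_)
  rintro ⟨u, hu⟩
  have hu_orth (j : Fin n) : (inner ℂ (u : H) (g j) : ℂ) = 0 :=
    inner_eq_zero_symm.1 (LinearMap.mem_ker.1 (Submodule.mem_iInf _ |>.1 hu j))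
  change ‖(inner ℂ x (T u) : ℂ)‖ ≤ C * ‖(u : H)‖
  rw [norm_inner_symm]
  exact hb u hu_orth

/-- Let `T` be a densely defined symmetric operator,
`g₁, …, gₙ ∈ H` and `D₀ = {u ∈ D(T) : (u, gⱼ) = 0 for all j}`. If the functional
`u ↦ (T u, x)` is bounded on `D₀`, then `x ∈ D(T*)`. -/
theorem mem_adjoint_domain_of_bounded_on_finite_codim
    {H : Type*} [NormedAddCommGroup H] [InnerProductSpace ℂ H] [CompleteSpace H]
    (T : H →ₗ.[ℂ] H) (hdense : Dense (T.domain : Set H)) (hsymm : IsSymm T)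
    (n : ℕ) (g : Fin n → H) (x : H) (C : ℝ) (hC : 0 ≤ C)
    (hb : ∀ u : T.domain, (∀ j : Fin n, (inner ℂ (u : H) (g j) : ℂ) = 0) →
      ‖(inner ℂ (T u) x : ℂ)‖ ≤ C * ‖(u : H)‖) :
    x ∈ T.adjoint.domain :=
  mem_adjoint_domain_of_bounded_on_finite_codim_general T n g x C hb

end PaperEss
end
end
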